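/- arXiv:2510.10527 — 4 statements merged into one kernel-verified Lean document; each statement's English description precedes it below -/
import Mathlib

section
/- Let T ∈ {0,1}, ρ ∈ (0,1) and y, m1, m0 be real numbers. Define w = (T − ρ)/(ρ(1 − ρ)) and b = (1 − ρ)·m1 + ρ·m0. Then y·w − b·w = T·(y − m1)/ρ − (1 − T)·(y − m0)/(1 − ρ) + m1 − m0. (That is, the denoised IPW transformation with the optimal denoising function coincides pointwise with the augmented IPW / doubly robust transformation.) -/
theorem ipw_weight_eq_sub {K : Type*} [Field K] {T ρ : K} (hρ : ρ ≠ 0) (hρ' : 1 - ρ ≠ 0) :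
    (T - ρ) / (ρ * (1 - ρ)) = T / ρ - (1 - T) / (1 - ρ) := by
  field_simp
  ring

theorem sub_mul_ipw_weight_eq_aipw {K : Type*} [Field K] (T y m1 m0 : K) {ρ : K}
    (hρ : ρ ≠ 0) (hρ' : 1 - ρ ≠ 0) :
    y * ((T - ρ) / (ρ * (1 - ρ))) - ((1 - ρ) * m1 + ρ * m0) * ((T - ρ) / (ρ * (1 - ρ)))
      = T * (y - m1) / ρ - (1 - T) * (y - m0) / (1 - ρ) + m1 - m0 := by
  rw [ipw_weight_eq_sub hρ hρ']
  field_simp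
  ring

theorem denoised_ipw_eq_aipw_general (T ρ y m1 m0 : ℝ)
    (hρ0 : 0 < ρ) (hρ1 : ρ < 1) :
    y * ((T - ρ) / (ρ * (1 - ρ))) - ((1 - ρ) * m1 + ρ * m0) * ((T - ρ) / (ρ * (1 - ρ)))
      = T * (y - m1) / ρ - (1 - T) * (y - m0) / (1 - ρ) + m1 - m0 :=
  sub_mul_ipw_weight_eq_aipw T y m1 m0 hρ0.ne' (sub_pos.2 hρ1).ne'

/-- The denoised IPW transformation with the optimal denoising function
`b = (1 - ρ)·m1 + ρ·m0` coincides pointwise with the augmented IPW (doubly robust)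
transformation. -/
theorem denoised_ipw_eq_aipw (T ρ y m1 m0 : ℝ) (hT : T = 0 ∨ T = 1)
    (hρ0 : 0 < ρ) (hρ1 : ρ < 1) :
    y * ((T - ρ) / (ρ * (1 - ρ))) - ((1 - ρ) * m1 + ρ * m0) * ((T - ρ) / (ρ * (1 - ρ)))
      = T * (y - m1) / ρ - (1 - T) * (y - m0) / (1 - ρ) + m1 - m0 :=
  denoised_ipw_eq_aipw_general T ρ y m1 m0 hρ0 hρ1
end

section
/- Under the RCT setup with overlap and unconfoundedness, if Y·W is integrable then almost surely E[Y·W | X] = E[Y(1) − Y(0) | X]; that is, the conditional expectation of the IPW-transformed outcome given the covariates identifies the conditional average treatment effect τ(X). -/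
/-!
Since `T` is binary, `Y·W = T·Y(1)/p(X) − (1 − T)·Y(0)/(1 − p(X))`. Unconfoundedness makes `T`
and `Y(1)` (resp. `1 − T` and `Y(0)`) independent under the regular conditional distribution
given `X`, so `E[T·Y(1) | X] = E[T | X]·E[Y(1) | X] = p(X)·E[Y(1) | X]`; dividing by the
`X`-measurable factor `p(X)` leaves `E[Y(1) | X]`, and symmetrically for the control arm.
Overlap bounds the weights `1/p(X)` and `1/(1 − p(X))`, which makes every term integrable.
-/

open MeasureTheory ProbabilityTheory

theorem integrable_inv_mul_mul_of_le {α : Type*} {mα : MeasurableSpace α} {μ : Measure α}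
    {ξ C : ℝ} (hξ : 0 < ξ) {p t y : α → ℝ} (hp : AEMeasurable p μ) (hpξ : ∀ a, ξ ≤ p a)
    (ht : AEStronglyMeasurable t μ) (htC : ∀ a, ‖t a‖ ≤ C) (hy : Integrable y μ) :
    Integrable (p⁻¹ * (t * y)) μ := by
  have hp_inv (a : α) : ‖(p a)⁻¹‖ ≤ ξ⁻¹ := by
    rw [norm_inv, Real.norm_of_nonneg (hξ.le.trans (hpξ a))]
    exact inv_anti₀ hξ (hpξ a)
  exact (hy.bdd_mul ht (.of_forall htC)).bdd_mul hp.inv.aestronglyMeasurable (.of_forall hp_inv)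

theorem condExp_one_sub {α : Type*} {m mα : MeasurableSpace α} {μ : Measure α}
    [IsFiniteMeasure μ] {f : α → ℝ} (hm : m ≤ mα) (hf : Integrable f μ) :
    μ[1 - f | m] =ᵐ[μ] 1 - μ[f | m] := by
  have h1 : μ[(1 : α → ℝ) | m] = 1 := condExp_const hm (1 : ℝ)
  have hsub : μ[1 - f | m] =ᵐ[μ] μ[1 | m] - μ[f | m] := condExp_sub (integrable_const 1) hf m
  rwa [h1] at hsub

namespace ProbabilityTheory

variable {Ω : Type*} {m mΩ : MeasurableSpace Ω} [StandardBorelSpace Ω]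
  {μ : Measure Ω} [IsFiniteMeasure μ]

theorem CondIndepFun.ae_indepFun_condExpKernel {β β' : Type*} [MeasurableSpace β]
    [MeasurableSpace β'] [MeasurableSpace.CountableOrCountablyGenerated Ω (β × β')]
    {hm : m ≤ mΩ} {f : Ω → β} {g : Ω → β'} (hf : Measurable f) (hg : Measurable g)
    (h : CondIndepFun m hm f g μ) :
    ∀ᵐ ω ∂μ, IndepFun f g (condExpKernel μ m ω) := by
  filter_upwards [ae_of_ae_trim hm ((condIndepFun_iff_map_prod_eq_prod_map_map hf hg).1 h)]
    with ω hω
  rw [indepFun_iff_map_prod_eq_prod_map_map hf.aemeasurable hg.aemeasurable]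
  rwa [Kernel.map_apply _ (hf.prodMk hg), Kernel.prod_apply, Kernel.map_apply _ hf,
    Kernel.map_apply _ hg] at hω

theorem CondIndepFun.condExp_mul {hm : m ≤ mΩ} {f g : Ω → ℝ} (hf : Measurable f)
    (hg : Measurable g) (h : CondIndepFun m hm f g μ) (hfi : Integrable f μ)
    (hgi : Integrable g μ) (hfgi : Integrable (f * g) μ) :
    μ[f * g | m] =ᵐ[μ] μ[f | m] * μ[g | m] := by
  filter_upwards [condExp_ae_eq_integral_condExpKernel hm hfgi,
    condExp_ae_eq_integral_condExpKernel hm hfi, condExp_ae_eq_integral_condExpKernel hm hgi,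
    h.ae_indepFun_condExpKernel hf hg] with ω hfg hf' hg' hind
  rw [hfg, Pi.mul_apply, hf', hg']
  exact hind.integral_mul_eq_mul_integral hf.aestronglyMeasurable hg.aestronglyMeasurable

theorem condExp_inv_mul_mul_eq_of_condIndepFun {hm : m ≤ mΩ} {ξ C : ℝ} (hξ : 0 < ξ)
    {p t y : Ω → ℝ} (hp : Measurable[m] p) (hpξ : ∀ ω, ξ ≤ p ω) (ht : Measurable t)
    (htC : ∀ ω, ‖t ω‖ ≤ C) (hy : Measurable y) (hyi : Integrable y μ)
    (hind : CondIndepFun m hm t y μ) (htp : μ[t | m] =ᵐ[μ] p) :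
    μ[p⁻¹ * (t * y) | m] =ᵐ[μ] μ[y | m] := by
  have hti : Integrable t μ := (integrable_const C).mono' ht.aestronglyMeasurable (.of_forall htC)
  have htyi : Integrable (t * y) μ := hyi.bdd_mul ht.aestronglyMeasurable (.of_forall htC)
  have hpull : μ[p⁻¹ * (t * y) | m] =ᵐ[μ] p⁻¹ * μ[t * y | m] :=
    condExp_mul_of_stronglyMeasurable_left hp.inv.stronglyMeasurable
      (integrable_inv_mul_mul_of_le hξ (hp.mono hm le_rfl).aemeasurable hpξ
        ht.aestronglyMeasurable htC hyi) htyi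
  filter_upwards [hpull, hind.condExp_mul ht hy hti hyi htyi, htp] with ω h1 h2 h3
  have hp0 : p ω ≠ 0 := (hξ.trans_le (hpξ ω)).ne'
  simp only [Pi.mul_apply, Pi.inv_apply] at h1 h2
  rw [h1, h2, h3, inv_mul_cancel_left₀ hp0]

theorem condExp_ipw_eq_condExp_sub {hm : m ≤ mΩ} {ξ : ℝ} (hξ : 0 < ξ) {p T Y1 Y0 : Ω → ℝ}
    (hp : Measurable[m] p) (hpξ : ∀ ω, ξ ≤ p ω) (hqξ : ∀ ω, ξ ≤ 1 - p ω) (hT : Measurable T)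
    (hT01 : ∀ ω, T ω = 0 ∨ T ω = 1) (hY1 : Measurable Y1) (hY0 : Measurable Y0)
    (hY1i : Integrable Y1 μ) (hY0i : Integrable Y0 μ)
    (hunconf : CondIndepFun m hm T (fun ω => (Y1 ω, Y0 ω)) μ) (hprop : μ[T | m] =ᵐ[μ] p) :
    μ[p⁻¹ * (T * Y1) - (1 - p)⁻¹ * ((1 - T) * Y0) | m] =ᵐ[μ] μ[Y1 - Y0 | m] := by
  have hT_le (ω : Ω) : ‖T ω‖ ≤ 1 := by rcases hT01 ω with h | h <;> simp [h]
  have h1T_le (ω : Ω) : ‖(1 - T) ω‖ ≤ 1 := by rcases hT01 ω with h | h <;> simp [h]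
  have hTi : Integrable T μ :=
    (integrable_const (1 : ℝ)).mono' hT.aestronglyMeasurable (.of_forall hT_le)
  have htreated : μ[p⁻¹ * (T * Y1) | m] =ᵐ[μ] μ[Y1 | m] :=
    condExp_inv_mul_mul_eq_of_condIndepFun hξ hp hpξ hT hT_le hY1 hY1i
      (hunconf.comp measurable_id measurable_fst) hprop
  have hcontrol : μ[(1 - p)⁻¹ * ((1 - T) * Y0) | m] =ᵐ[μ] μ[Y0 | m] :=
    condExp_inv_mul_mul_eq_of_condIndepFun hξ (measurable_const.sub hp) hqξ
      (measurable_const.sub hT) h1T_le hY0 hY0i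
      (hunconf.comp (measurable_const.sub measurable_id) measurable_snd)
      ((condExp_one_sub hm hTi).trans (Filter.EventuallyEq.rfl.sub hprop))
  calc μ[p⁻¹ * (T * Y1) - (1 - p)⁻¹ * ((1 - T) * Y0) | m]
      =ᵐ[μ] μ[p⁻¹ * (T * Y1) | m] - μ[(1 - p)⁻¹ * ((1 - T) * Y0) | m] :=
        condExp_sub
          (integrable_inv_mul_mul_of_le hξ (hp.mono hm le_rfl).aemeasurable hpξ
            hT.aestronglyMeasurable hT_le hY1i)
          (integrable_inv_mul_mul_of_le hξ
            ((measurable_const.sub hp).mono hm le_rfl).aemeasurable hqξ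
            (measurable_const.sub hT).aestronglyMeasurable h1T_le hY0i) m
    _ =ᵐ[μ] μ[Y1 | m] - μ[Y0 | m] := htreated.sub hcontrol
    _ =ᵐ[μ] μ[Y1 - Y0 | m] := (condExp_sub hY1i hY0i m).symm

end ProbabilityTheory

theorem ipw_mul_weight_eq {t p y₁ y₀ : ℝ} (ht : t = 0 ∨ t = 1) (hp₀ : p ≠ 0) (hp₁ : 1 - p ≠ 0) :
    (t * y₁ + (1 - t) * y₀) * ((t - p) / (p * (1 - p)))
      = p⁻¹ * (t * y₁) - (1 - p)⁻¹ * ((1 - t) * y₀) := by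
  rcases ht with rfl | rfl <;> field_simp <;> ring

theorem ipw_identifies_cate_general
    {Ω : Type} [mΩ : MeasurableSpace Ω] [StandardBorelSpace Ω]
    (μ : Measure Ω) [IsProbabilityMeasure μ]
    {d : ℕ} (X : Ω → (Fin d → ℝ)) (Y1 Y0 T : Ω → ℝ)
    (hX : Measurable X) (hY1 : Measurable Y1) (hY0 : Measurable Y0) (hT : Measurable T)
    -- binary treatment
    (hT01 : ∀ ω, T ω = 0 ∨ T ω = 1)
    -- known propensity score with overlap (Assumption 2)
    (ρ : (Fin d → ℝ) → ℝ) (hρ : Measurable ρ)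
    (ξ : ℝ) (hξ : 0 < ξ) (hover : ∀ x, ξ < ρ x ∧ ρ x < 1 - ξ)
    (hprop : μ[T | MeasurableSpace.comap X inferInstance] =ᵐ[μ] fun ω => ρ (X ω))
    -- unconfoundedness (Assumption 1)
    (hunconf : CondIndepFun (MeasurableSpace.comap X inferInstance) hX.comap_le
      T (fun ω => (Y1 ω, Y0 ω)) μ)
    -- integrable potential outcomes
    (hY1int : Integrable Y1 μ) (hY0int : Integrable Y0 μ)
    -- observed outcome and IPW weight
    (Y : Ω → ℝ) (hY : Y = fun ω => T ω * Y1 ω + (1 - T ω) * Y0 ω)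
    (W : Ω → ℝ)
    (hW : W = fun ω => (T ω - ρ (X ω)) / (ρ (X ω) * (1 - ρ (X ω)))) :
    μ[fun ω => Y ω * W ω | MeasurableSpace.comap X inferInstance]
      =ᵐ[μ] μ[fun ω => Y1 ω - Y0 ω | MeasurableSpace.comap X inferInstance] := by
  set p : Ω → ℝ := fun ω => ρ (X ω)
  have hpξ (ω : Ω) : ξ ≤ p ω := (hover (X ω)).1.le
  have hqξ (ω : Ω) : ξ ≤ 1 - p ω := by linarith [(hover (X ω)).2]
  have hYW : (fun ω => Y ω * W ω) = p⁻¹ * (T * Y1) - (1 - p)⁻¹ * ((1 - T) * Y0) := by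
    funext ω
    have hp₀ : p ω ≠ 0 := (hξ.trans_le (hpξ ω)).ne'
    have hp₁ : 1 - p ω ≠ 0 := (hξ.trans_le (hqξ ω)).ne'
    simpa [hY, hW] using ipw_mul_weight_eq (y₁ := Y1 ω) (y₀ := Y0 ω) (hT01 ω) hp₀ hp₁
  rw [hYW]
  exact condExp_ipw_eq_condExp_sub hξ (hρ.comp (Measurable.of_comap_le le_rfl)) hpξ hqξ hT hT01
    hY1 hY0 hY1int hY0int hunconf hprop

/-- Under the RCT setup with overlap and unconfoundedness, the conditional expectation of
the IPW-transformed outcome `Y·W` given the covariates `X` identifies the conditional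
average treatment effect `E[Y(1) − Y(0) | X]`, almost surely. -/
theorem ipw_identifies_cate
    {Ω : Type} [mΩ : MeasurableSpace Ω] [StandardBorelSpace Ω] [Nonempty Ω]
    (μ : Measure Ω) [IsProbabilityMeasure μ]
    {d : ℕ} (X : Ω → (Fin d → ℝ)) (Y1 Y0 T : Ω → ℝ)
    (hX : Measurable X) (hY1 : Measurable Y1) (hY0 : Measurable Y0) (hT : Measurable T)
    -- binary treatment
    (hT01 : ∀ ω, T ω = 0 ∨ T ω = 1)
    -- known propensity score with overlap (Assumption 2)
    (ρ : (Fin d → ℝ) → ℝ) (hρ : Measurable ρ)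
    (ξ : ℝ) (hξ : 0 < ξ) (hover : ∀ x, ξ < ρ x ∧ ρ x < 1 - ξ)
    (hprop : μ[T | MeasurableSpace.comap X inferInstance] =ᵐ[μ] fun ω => ρ (X ω))
    -- unconfoundedness (Assumption 1)
    (hunconf : CondIndepFun (MeasurableSpace.comap X inferInstance) hX.comap_le
      T (fun ω => (Y1 ω, Y0 ω)) μ)
    -- integrable potential outcomes
    (hY1int : Integrable Y1 μ) (hY0int : Integrable Y0 μ)
    -- observed outcome and IPW weight
    (Y : Ω → ℝ) (hY : Y = fun ω => T ω * Y1 ω + (1 - T ω) * Y0 ω)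
    (W : Ω → ℝ)
    (hW : W = fun ω => (T ω - ρ (X ω)) / (ρ (X ω) * (1 - ρ (X ω))))
    (hYWint : Integrable (fun ω => Y ω * W ω) μ) :
    μ[fun ω => Y ω * W ω | MeasurableSpace.comap X inferInstance]
      =ᵐ[μ] μ[fun ω => Y1 ω - Y0 ω | MeasurableSpace.comap X inferInstance] :=
  ipw_identifies_cate_general (mΩ := mΩ) μ X Y1 Y0 T hX hY1 hY0 hT hT01 ρ hρ ξ hξ hover hprop
    hunconf hY1int hY0int Y hY W hW
end

section
/- (Proposition 1, optimal denoising function.) Under the RCT setup with overlap and unconfoundedness, define B*(x) = (1 − p(x))·μ1(x) + p(x)·μ0(x), where μ1(x) = E[Y(1) | X = x] and μ0(x) = E[Y(0) | X = x]. Then B* solves min over measurable B of E[(Y·W − B(X)·W)²]: for every measurable B: ℝ^p → ℝ such that B(X)·W is square-integrable, E[(Y·W − B*(X)·W)²] ≤ E[(Y·W − B(X)·W)²]. -/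
/-!
Put `R = Y·W − B*(X)·W`, so that `Y·W − B(X)·W = R + (B* − B)(X)·W`; it suffices that `R` is
orthogonal in `L²` to every `g(X)·W`, i.e. that `E[R·W | X] = 0`. Since `T` is binary,
`R·W = (Y − B*(X))·W² = T·(Y(1) − B*(X))/p(X)² + (1 − T)·(Y(0) − B*(X))/(1 − p(X))²`.
Unconfoundedness gives `E[T·Y(1) | X] = p(X)·μ1(X)` (a product of conditionally independent
variables factors under almost every measure of the regular conditional distribution given `X`),
so `E[R·W | X] = (μ1 − B*)/p + (μ0 − B*)/(1 − p)` at `X`, which vanishes exactly for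
`B* = (1 − p)·μ1 + p·μ0`.
-/

open MeasureTheory ProbabilityTheory

theorem abs_inv_sq_le {a ξ : ℝ} (hξ : 0 < ξ) (ha : ξ ≤ a) : |a⁻¹ ^ 2| ≤ ξ⁻¹ ^ 2 := by
  rw [abs_pow, abs_inv, abs_of_pos (hξ.trans_le ha)]
  exact pow_le_pow_left₀ (inv_nonneg.2 (hξ.le.trans ha)) (inv_anti₀ hξ ha) 2

theorem abs_ipw_weight_le {t p ξ : ℝ} (ht : t = 0 ∨ t = 1) (hξ : 0 < ξ) (hp_lo : ξ ≤ p)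
    (hp_hi : p ≤ 1 - ξ) : |(t - p) / (p * (1 - p))| ≤ ξ⁻¹ := by
  have hp : 0 < p := hξ.trans_le hp_lo
  have hp' : 0 < 1 - p := by linarith
  rcases ht with rfl | rfl
  · rw [show (0 - p) / (p * (1 - p)) = -(1 - p)⁻¹ by field_simp; ring, abs_neg,
      abs_of_pos (inv_pos.2 hp')]
    exact inv_anti₀ hξ (by linarith)
  · rw [show (1 - p) / (p * (1 - p)) = p⁻¹ by field_simp, abs_of_pos (inv_pos.2 hp)]
    exact inv_anti₀ hξ hp_lo

theorem ipw_residual_mul_sq_eq {t y1 y0 p q : ℝ} (ht : t = 0 ∨ t = 1) (hp : p ≠ 0)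
    (hp' : 1 - p ≠ 0) :
    (t * y1 + (1 - t) * y0 - q) * ((t - p) / (p * (1 - p))) ^ 2
      = p⁻¹ ^ 2 * (t * (y1 - q)) + (1 - p)⁻¹ ^ 2 * ((1 - t) * (y0 - q)) := by
  rcases ht with rfl | rfl <;> field_simp <;> ring

section

variable {Ω : Type*} {m mΩ : MeasurableSpace Ω} {μ : Measure Ω}

theorem Integrable.one_sub_mul_add_mul {f g p : Ω → ℝ} (hf : Integrable f μ)
    (hg : Integrable g μ) (hp : AEStronglyMeasurable p μ) (hp01 : ∀ ω, p ω ∈ Set.Icc 0 1) :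
    Integrable (fun ω => (1 - p ω) * f ω + p ω * g ω) μ := by
  have hp_bdd : ∀ ω, ‖p ω‖ ≤ 1 := fun ω => by
    rw [Real.norm_eq_abs, abs_le]; constructor <;> linarith [(hp01 ω).1, (hp01 ω).2]
  have hp'_bdd : ∀ ω, ‖1 - p ω‖ ≤ 1 := fun ω => by
    rw [Real.norm_eq_abs, abs_le]; constructor <;> linarith [(hp01 ω).1, (hp01 ω).2]
  exact (hf.bdd_mul (aestronglyMeasurable_const.sub hp) (ae_of_all _ hp'_bdd)).add
    (hg.bdd_mul hp (ae_of_all _ hp_bdd))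

theorem integrable_mul_mul_sub {S Z f c : Ω → ℝ} {K C : ℝ}
    (hS : AEStronglyMeasurable S μ) (hS_bdd : ∀ ω, |S ω| ≤ K) (hZf : Integrable (Z - f) μ)
    (hc : AEStronglyMeasurable c μ) (hc_bdd : ∀ ω, |c ω| ≤ C) :
    Integrable (fun ω => c ω * (S ω * (Z ω - f ω))) μ :=
  (hZf.bdd_mul hS (ae_of_all _ hS_bdd)).bdd_mul hc (ae_of_all _ hc_bdd)

theorem integral_sq_le_integral_add_sq_of_integral_mul_eq_zero {R G : Ω → ℝ}
    (hR : MemLp R 2 μ) (hG : MemLp G 2 μ) (hRG : ∫ ω, R ω * G ω ∂μ = 0) :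
    ∫ ω, R ω ^ 2 ∂μ ≤ ∫ ω, (R ω + G ω) ^ 2 ∂μ := by
  have hRG_int : Integrable (fun ω => 2 * (R ω * G ω)) μ := (hR.integrable_mul hG).const_mul 2
  have hexpand : ∫ ω, (R ω + G ω) ^ 2 ∂μ
      = ∫ ω, R ω ^ 2 ∂μ + 2 * ∫ ω, R ω * G ω ∂μ + ∫ ω, G ω ^ 2 ∂μ := by
    rw [← integral_const_mul, ← integral_add hR.integrable_sq hRG_int,
      ← integral_add (f := fun ω => R ω ^ 2 + 2 * (R ω * G ω))
        (hR.integrable_sq.add hRG_int) hG.integrable_sq]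
    congr 1 with ω
    ring
  have hG_sq : 0 ≤ ∫ ω, G ω ^ 2 ∂μ := integral_nonneg fun ω => sq_nonneg (G ω)
  rw [hexpand, hRG]
  linarith

theorem condExp_mul_ae_eq_of_condIndepFun [StandardBorelSpace Ω] [IsFiniteMeasure μ]
    (hm : m ≤ mΩ) {f g : Ω → ℝ} (hf : Measurable f) (hg : Measurable g)
    (hfg : CondIndepFun m hm f g μ) (hf_int : Integrable f μ) (hg_int : Integrable g μ)
    (hfg_int : Integrable (f * g) μ) :
    μ[f * g | m] =ᵐ[μ] μ[f | m] * μ[g | m] := by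
  have hindep : ∀ᵐ ω ∂μ, IndepFun f g (condExpKernel μ m ω) := by
    refine ae_of_ae_trim hm ?_
    filter_upwards [(condIndepFun_iff_map_prod_eq_prod_map_map hf hg).1 hfg] with ω hω
    rw [indepFun_iff_map_prod_eq_prod_map_map hf.aemeasurable hg.aemeasurable]
    simpa [Kernel.map_apply _ (hf.prodMk hg), Kernel.prod_apply, Kernel.map_apply _ hf,
      Kernel.map_apply _ hg] using hω
  filter_upwards [hindep, condExp_ae_eq_integral_condExpKernel hm hfg_int,
    condExp_ae_eq_integral_condExpKernel hm hf_int,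
    condExp_ae_eq_integral_condExpKernel hm hg_int] with ω hω hfg_eq hf_eq hg_eq
  rw [Pi.mul_apply, hfg_eq, hf_eq, hg_eq]
  exact hω.integral_mul_eq_mul_integral hf.aestronglyMeasurable hg.aestronglyMeasurable

theorem condExp_mul_mul_sub_ae_eq_of_condIndepFun [StandardBorelSpace Ω] [IsFiniteMeasure μ]
    (hm : m ≤ mΩ) {S Z f c : Ω → ℝ} {K C : ℝ} (hS : Measurable S) (hZ : Measurable Z)
    (hSZ : CondIndepFun m hm S Z μ) (hS_bdd : ∀ ω, |S ω| ≤ K) (hZ_int : Integrable Z μ)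
    (hf : StronglyMeasurable[m] f) (hf_int : Integrable f μ)
    (hc : StronglyMeasurable[m] c) (hc_bdd : ∀ ω, |c ω| ≤ C) :
    μ[fun ω => c ω * (S ω * (Z ω - f ω)) | m]
      =ᵐ[μ] fun ω => c ω * ((μ[S | m]) ω * ((μ[Z | m]) ω - f ω)) := by
  have hS_int : Integrable S μ :=
    (integrable_const K).mono' hS.aestronglyMeasurable (ae_of_all _ hS_bdd)
  have hSZ_int : Integrable (S * Z) μ :=
    hZ_int.bdd_mul hS.aestronglyMeasurable (ae_of_all _ hS_bdd)
  have hfS_int : Integrable (f * S) μ :=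
    hf_int.mul_bdd hS.aestronglyMeasurable (ae_of_all _ hS_bdd)
  have hexpand : (fun ω => c ω * (S ω * (Z ω - f ω))) = c * (S * Z - f * S) := by
    ext ω; simp only [Pi.mul_apply, Pi.sub_apply]; ring
  rw [hexpand]
  filter_upwards [condExp_stronglyMeasurable_mul_of_bound hm hc (hSZ_int.sub hfS_int) C
      (ae_of_all _ hc_bdd), condExp_sub hSZ_int hfS_int m,
    condExp_mul_ae_eq_of_condIndepFun hm hS hZ hSZ hS_int hZ_int hSZ_int,
    condExp_mul_of_stronglyMeasurable_left hf hfS_int hS_int] with ω h_out h_sub h_SZ h_fS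
  simp only [h_out, Pi.mul_apply, h_sub, Pi.sub_apply, h_SZ, h_fS]
  ring

theorem integral_mul_eq_zero_of_condExp_ae_eq_zero (hm : m ≤ mΩ) [SigmaFinite (μ.trim hm)]
    {g h : Ω → ℝ} (hg : StronglyMeasurable[m] g) (hh_int : Integrable h μ)
    (hgh_int : Integrable (g * h) μ) (hh : μ[h | m] =ᵐ[μ] 0) :
    ∫ ω, g ω * h ω ∂μ = 0 := calc
  ∫ ω, g ω * h ω ∂μ = ∫ ω, (μ[g * h | m]) ω ∂μ := (integral_condExp hm).symm
  _ = ∫ ω, g ω * (μ[h | m]) ω ∂μ :=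
    integral_congr_ae (condExp_mul_of_stronglyMeasurable_left hg hgh_int hh_int)
  _ = 0 := integral_eq_zero_of_ae <| by filter_upwards [hh] with ω hω; simp [hω]

theorem integral_sq_le_integral_add_mul_sq_of_condExp_mul_ae_eq_zero (hm : m ≤ mΩ)
    [IsFiniteMeasure μ] [SigmaFinite (μ.trim hm)] {R g W : Ω → ℝ} {C : ℝ}
    (hR : MemLp R 2 μ) (hg : StronglyMeasurable[m] g) (hgW : MemLp (fun ω => g ω * W ω) 2 μ)
    (hW : AEStronglyMeasurable W μ) (hW_bdd : ∀ ω, |W ω| ≤ C)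
    (hRW : μ[fun ω => R ω * W ω | m] =ᵐ[μ] 0) :
    ∫ ω, R ω ^ 2 ∂μ ≤ ∫ ω, (R ω + g ω * W ω) ^ 2 ∂μ := by
  refine integral_sq_le_integral_add_sq_of_integral_mul_eq_zero hR hgW ?_
  have hcongr : ∀ ω, R ω * (g ω * W ω) = g ω * (R ω * W ω) := fun ω => by ring
  simp_rw [hcongr]
  exact integral_mul_eq_zero_of_condExp_ae_eq_zero hm hg
    ((hR.integrable one_le_two).mul_bdd hW (ae_of_all _ hW_bdd))
    ((hR.integrable_mul hgW).congr (ae_of_all _ hcongr)) hRW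

theorem condExp_ipw_residual_ae_eq_zero [StandardBorelSpace Ω] [IsFiniteMeasure μ]
    (hm : m ≤ mΩ) {T Y1 Y0 p q1 q0 : Ω → ℝ} {ξ : ℝ}
    (hT : Measurable T) (hY1 : Measurable Y1) (hY0 : Measurable Y0)
    (hT01 : ∀ ω, T ω = 0 ∨ T ω = 1)
    (hunconf : CondIndepFun m hm T (fun ω => (Y1 ω, Y0 ω)) μ)
    (hY1_int : Integrable Y1 μ) (hY0_int : Integrable Y0 μ)
    (hp : StronglyMeasurable[m] p) (hξ : 0 < ξ) (hp_lo : ∀ ω, ξ ≤ p ω)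
    (hp_hi : ∀ ω, p ω ≤ 1 - ξ) (hTp : μ[T | m] =ᵐ[μ] p)
    (hq1 : StronglyMeasurable[m] q1) (hq0 : StronglyMeasurable[m] q0)
    (hY1q1 : μ[Y1 | m] =ᵐ[μ] q1) (hY0q0 : μ[Y0 | m] =ᵐ[μ] q0) :
    μ[fun ω => (T ω * Y1 ω + (1 - T ω) * Y0 ω - ((1 - p ω) * q1 ω + p ω * q0 ω))
        * ((T ω - p ω) / (p ω * (1 - p ω))) ^ 2 | m] =ᵐ[μ] 0 := by
  have hp_pos : ∀ ω, 0 < p ω := fun ω => hξ.trans_le (hp_lo ω)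
  have hp'_pos : ∀ ω, 0 < 1 - p ω := fun ω => by linarith [hp_hi ω]
  have hT_bdd : ∀ ω, |T ω| ≤ 1 := fun ω => by rcases hT01 ω with h | h <;> simp [h]
  have hT'_bdd : ∀ ω, |1 - T ω| ≤ 1 := fun ω => by rcases hT01 ω with h | h <;> simp [h]
  have hc1_bdd : ∀ ω, |(p ω)⁻¹ ^ 2| ≤ ξ⁻¹ ^ 2 := fun ω => abs_inv_sq_le hξ (hp_lo ω)
  have hc0_bdd : ∀ ω, |(1 - p ω)⁻¹ ^ 2| ≤ ξ⁻¹ ^ 2 :=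
    fun ω => abs_inv_sq_le hξ (by linarith [hp_hi ω])
  set q : Ω → ℝ := fun ω => (1 - p ω) * q1 ω + p ω * q0 ω
  have hq : StronglyMeasurable[m] q :=
    ((stronglyMeasurable_const.sub hp).mul hq1).add (hp.mul hq0)
  have hq_int : Integrable q μ :=
    Integrable.one_sub_mul_add_mul (integrable_condExp.congr hY1q1) (integrable_condExp.congr hY0q0)
      (hp.mono hm).aestronglyMeasurable fun ω => ⟨(hp_pos ω).le, by linarith [hp'_pos ω]⟩
  have hc1 : StronglyMeasurable[m] fun ω => (p ω)⁻¹ ^ 2 :=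
    (hp.measurable.inv.pow_const 2).stronglyMeasurable
  have hc0 : StronglyMeasurable[m] fun ω => (1 - p ω)⁻¹ ^ 2 :=
    ((measurable_const.sub hp.measurable).inv.pow_const 2).stronglyMeasurable
  have hT_int : Integrable T μ :=
    (integrable_const 1).mono' hT.aestronglyMeasurable (ae_of_all _ hT_bdd)
  have hT' : Measurable fun ω => 1 - T ω := measurable_const.sub hT
  have h1Tp : μ[fun ω => 1 - T ω | m] =ᵐ[μ] fun ω => 1 - p ω := by
    filter_upwards [condExp_sub (integrable_const 1) hT_int m, hTp] with ω h_sub h_T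
    rw [show (fun ω => 1 - T ω) = (fun _ => 1) - T from rfl, h_sub, Pi.sub_apply,
      condExp_const hm, h_T]
  have hsplit : (fun ω => (T ω * Y1 ω + (1 - T ω) * Y0 ω - q ω)
        * ((T ω - p ω) / (p ω * (1 - p ω))) ^ 2)
      = (fun ω => (p ω)⁻¹ ^ 2 * (T ω * (Y1 ω - q ω)))
        + fun ω => (1 - p ω)⁻¹ ^ 2 * ((1 - T ω) * (Y0 ω - q ω)) :=
    funext fun ω => ipw_residual_mul_sq_eq (hT01 ω) (hp_pos ω).ne' (hp'_pos ω).ne'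
  rw [hsplit]
  filter_upwards [condExp_add
      (integrable_mul_mul_sub hT.aestronglyMeasurable hT_bdd (hY1_int.sub hq_int)
        (hc1.mono hm).aestronglyMeasurable hc1_bdd)
      (integrable_mul_mul_sub hT'.aestronglyMeasurable hT'_bdd (hY0_int.sub hq_int)
        (hc0.mono hm).aestronglyMeasurable hc0_bdd) m,
    condExp_mul_mul_sub_ae_eq_of_condIndepFun hm hT hY1 (hunconf.comp measurable_id measurable_fst)
      hT_bdd hY1_int hq hq_int hc1 hc1_bdd,
    condExp_mul_mul_sub_ae_eq_of_condIndepFun hm hT' hY0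
      (hunconf.comp (measurable_const.sub measurable_id) measurable_snd)
      hT'_bdd hY0_int hq hq_int hc0 hc0_bdd, hTp, h1Tp, hY1q1, hY0q0]
    with ω h_add h_treated h_control h_T h_1T h_Y1 h_Y0
  rw [h_add, Pi.add_apply, h_treated, h_control, h_T, h_1T, h_Y1, h_Y0, Pi.zero_apply]
  field_simp [(hp_pos ω).ne', (hp'_pos ω).ne']
  ring

end

theorem optimal_denoising_function_general
    {Ω : Type} [mΩ : MeasurableSpace Ω] [StandardBorelSpace Ω]
    (μ : Measure Ω) [IsProbabilityMeasure μ]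
    {d : ℕ} (X : Ω → (Fin d → ℝ)) (Y1 Y0 T : Ω → ℝ)
    (hX : Measurable X) (hY1 : Measurable Y1) (hY0 : Measurable Y0) (hT : Measurable T)
    -- binary treatment
    (hT01 : ∀ ω, T ω = 0 ∨ T ω = 1)
    -- known propensity score with overlap (Assumption 2)
    (ρ : (Fin d → ℝ) → ℝ) (hρ : Measurable ρ)
    (ξ : ℝ) (hξ : 0 < ξ) (hover : ∀ x, ξ < ρ x ∧ ρ x < 1 - ξ)
    (hprop : μ[T | MeasurableSpace.comap X inferInstance] =ᵐ[μ] fun ω => ρ (X ω))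
    -- unconfoundedness (Assumption 1)
    (hunconf : CondIndepFun (MeasurableSpace.comap X inferInstance) hX.comap_le
      T (fun ω => (Y1 ω, Y0 ω)) μ)
    -- integrable potential outcomes
    (hY1int : Integrable Y1 μ) (hY0int : Integrable Y0 μ)
    -- conditional mean functions μ1 and μ0
    (m1 m0 : (Fin d → ℝ) → ℝ) (hm1 : Measurable m1) (hm0 : Measurable m0)
    (hm1eq : μ[Y1 | MeasurableSpace.comap X inferInstance] =ᵐ[μ] fun ω => m1 (X ω))
    (hm0eq : μ[Y0 | MeasurableSpace.comap X inferInstance] =ᵐ[μ] fun ω => m0 (X ω))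
    -- observed outcome and IPW weight
    (Y : Ω → ℝ) (hY : Y = fun ω => T ω * Y1 ω + (1 - T ω) * Y0 ω)
    (W : Ω → ℝ)
    (hW : W = fun ω => (T ω - ρ (X ω)) / (ρ (X ω) * (1 - ρ (X ω))))
    -- the candidate optimal denoising function B*
    (Bstar : (Fin d → ℝ) → ℝ)
    (hBstar : Bstar = fun x => (1 - ρ x) * m1 x + ρ x * m0 x)
    -- square-integrability of Y·W and B*(X)·W
    (hYW2 : Integrable (fun ω => (Y ω * W ω) ^ 2) μ)
    (hBstarW2 : Integrable (fun ω => (Bstar (X ω) * W ω) ^ 2) μ) :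
    ∀ B : (Fin d → ℝ) → ℝ, Measurable B →
      Integrable (fun ω => (B (X ω) * W ω) ^ 2) μ →
      ∫ ω, (Y ω * W ω - Bstar (X ω) * W ω) ^ 2 ∂μ
        ≤ ∫ ω, (Y ω * W ω - B (X ω) * W ω) ^ 2 ∂μ := by
  intro B hB hBW2
  have hXm : Measurable[MeasurableSpace.comap X inferInstance] X := comap_measurable X
  have hY_meas : Measurable Y := hY ▸ by fun_prop
  have hW_meas : Measurable W := hW ▸ by fun_prop
  have hBstar_meas : Measurable Bstar := hBstar ▸ by fun_prop
  have hW_bdd : ∀ ω, |W ω| ≤ ξ⁻¹ := fun ω => hW ▸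
    abs_ipw_weight_le (hT01 ω) hξ (hover (X ω)).1.le (hover (X ω)).2.le
  have hmemLp : ∀ {f : Ω → ℝ}, Measurable f → Integrable (fun ω => (f ω * W ω) ^ 2) μ →
      MemLp (fun ω => f ω * W ω) 2 μ :=
    fun hf hf2 => (memLp_two_iff_integrable_sq (hf.mul hW_meas).aestronglyMeasurable).2 hf2
  have hR : MemLp (fun ω => Y ω * W ω - Bstar (X ω) * W ω) 2 μ :=
    (hmemLp hY_meas hYW2).sub (hmemLp (hBstar_meas.comp hX) hBstarW2)
  have hG : MemLp (fun ω => (Bstar (X ω) - B (X ω)) * W ω) 2 μ :=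
    ((hmemLp (hBstar_meas.comp hX) hBstarW2).sub (hmemLp (hB.comp hX) hBW2)).ae_eq
      (ae_of_all _ fun ω => by simp only [Pi.sub_apply, Function.comp_apply]; ring)
  have hres : μ[fun ω => (Y ω * W ω - Bstar (X ω) * W ω) * W ω
      | MeasurableSpace.comap X inferInstance] =ᵐ[μ] 0 := by
    have hRW : (fun ω => (Y ω * W ω - Bstar (X ω) * W ω) * W ω)
        = fun ω => (Y ω - Bstar (X ω)) * W ω ^ 2 := by
      ext ω; ring
    rw [hRW]
    subst hY hW hBstar
    exact condExp_ipw_residual_ae_eq_zero hX.comap_le hT hY1 hY0 hT01 hunconf hY1int hY0int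
      (hρ.comp hXm).stronglyMeasurable hξ (fun ω => (hover (X ω)).1.le)
      (fun ω => (hover (X ω)).2.le) hprop (hm1.comp hXm).stronglyMeasurable
      (hm0.comp hXm).stronglyMeasurable hm1eq hm0eq
  refine (integral_sq_le_integral_add_mul_sq_of_condExp_mul_ae_eq_zero hX.comap_le hR
    (g := fun ω => Bstar (X ω) - B (X ω)) ((hBstar_meas.sub hB).comp hXm).stronglyMeasurable
    hG hW_meas.aestronglyMeasurable hW_bdd hres).trans_eq ?_
  congr 1 with ω
  ring

/-- Proposition 1 (optimal denoising function).  Under the RCT setup with overlap and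
unconfoundedness, the function `B*(x) = (1 − p(x))·μ1(x) + p(x)·μ0(x)` minimizes
`E[(Y·W − B(X)·W)²]` over all measurable functions `B` such that `B(X)·W` is
square-integrable. -/
theorem optimal_denoising_function
    {Ω : Type} [mΩ : MeasurableSpace Ω] [StandardBorelSpace Ω] [Nonempty Ω]
    (μ : Measure Ω) [IsProbabilityMeasure μ]
    {d : ℕ} (X : Ω → (Fin d → ℝ)) (Y1 Y0 T : Ω → ℝ)
    (hX : Measurable X) (hY1 : Measurable Y1) (hY0 : Measurable Y0) (hT : Measurable T)
    -- binary treatment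
    (hT01 : ∀ ω, T ω = 0 ∨ T ω = 1)
    -- known propensity score with overlap (Assumption 2)
    (ρ : (Fin d → ℝ) → ℝ) (hρ : Measurable ρ)
    (ξ : ℝ) (hξ : 0 < ξ) (hover : ∀ x, ξ < ρ x ∧ ρ x < 1 - ξ)
    (hprop : μ[T | MeasurableSpace.comap X inferInstance] =ᵐ[μ] fun ω => ρ (X ω))
    -- unconfoundedness (Assumption 1)
    (hunconf : CondIndepFun (MeasurableSpace.comap X inferInstance) hX.comap_le
      T (fun ω => (Y1 ω, Y0 ω)) μ)
    -- integrable potential outcomes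
    (hY1int : Integrable Y1 μ) (hY0int : Integrable Y0 μ)
    -- conditional mean functions μ1 and μ0
    (m1 m0 : (Fin d → ℝ) → ℝ) (hm1 : Measurable m1) (hm0 : Measurable m0)
    (hm1eq : μ[Y1 | MeasurableSpace.comap X inferInstance] =ᵐ[μ] fun ω => m1 (X ω))
    (hm0eq : μ[Y0 | MeasurableSpace.comap X inferInstance] =ᵐ[μ] fun ω => m0 (X ω))
    -- observed outcome and IPW weight
    (Y : Ω → ℝ) (hY : Y = fun ω => T ω * Y1 ω + (1 - T ω) * Y0 ω)
    (W : Ω → ℝ)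
    (hW : W = fun ω => (T ω - ρ (X ω)) / (ρ (X ω) * (1 - ρ (X ω))))
    -- the candidate optimal denoising function B*
    (Bstar : (Fin d → ℝ) → ℝ)
    (hBstar : Bstar = fun x => (1 - ρ x) * m1 x + ρ x * m0 x)
    -- square-integrability of Y·W and B*(X)·W
    (hYW2 : Integrable (fun ω => (Y ω * W ω) ^ 2) μ)
    (hBstarW2 : Integrable (fun ω => (Bstar (X ω) * W ω) ^ 2) μ) :
    ∀ B : (Fin d → ℝ) → ℝ, Measurable B →
      Integrable (fun ω => (B (X ω) * W ω) ^ 2) μ →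
      ∫ ω, (Y ω * W ω - Bstar (X ω) * W ω) ^ 2 ∂μ
        ≤ ∫ ω, (Y ω * W ω - B (X ω) * W ω) ^ 2 ∂μ :=
  optimal_denoising_function_general (mΩ := mΩ) μ X Y1 Y0 T hX hY1 hY0 hT hT01 ρ hρ ξ hξ hover hprop
    hunconf hY1int hY0int m1 m0 hm1 hm0 hm1eq hm0eq Y hY W hW Bstar hBstar hYW2 hBstarW2
end

section
/- (Deterministic Lasso prediction bound, equation (9).) Let X ∈ ℝ^{n×p}, y ∈ ℝ^n, β ∈ ℝ^p, e = y − X·β, and let β̃ be any minimizer over b ∈ ℝ^p of (1/(2n))·‖y − X·b‖₂² + λ·‖b‖₁. If ‖(1/n)·X'·e‖∞ ≤ λ₀ and λ ≥ λ₀, then (1/n)·‖X·β̃ − X·β‖₂² ≤ 4·λ·‖β‖₁. -/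
open Matrix

/-- The ℓ₁ norm on `ℝ^p`. -/
noncomputable def l1norm {p : ℕ} (v : Fin p → ℝ) : ℝ := ∑ j, |v j|

/-- The squared Euclidean norm on `ℝ^n`. -/
noncomputable def l2normSq {n : ℕ} (v : Fin n → ℝ) : ℝ := ∑ i, (v i) ^ 2

/-- The ℓ∞ norm on `ℝ^p`. -/
noncomputable def linftyNorm {p : ℕ} (v : Fin p → ℝ) : ℝ := ⨆ j, |v j|

/-!
Comparing the Lasso objective at its minimizer `β̃` with its value at `β` gives the basic
inequality `(1/2n)‖X(β̃ - β)‖² + λ‖β̃‖₁ ≤ (1/n)⟨X'e, β̃ - β⟩ + λ‖β‖₁`. By Hölder the noise term is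
at most `λ₀‖β̃ - β‖₁ ≤ λ(‖β̃‖₁ + ‖β‖₁)`, so the `λ‖β̃‖₁` terms cancel and `(1/2n)‖X(β̃ - β)‖² ≤ 2λ‖β‖₁`.
-/

lemma l1norm_nonneg {p : ℕ} (v : Fin p → ℝ) : 0 ≤ l1norm v :=
  Finset.sum_nonneg fun _ _ => abs_nonneg _

lemma l1norm_sub_le {p : ℕ} (a b : Fin p → ℝ) : l1norm (a - b) ≤ l1norm a + l1norm b := by
  rw [l1norm, l1norm, l1norm, ← Finset.sum_add_distrib]
  exact Finset.sum_le_sum fun j _ => abs_sub (a j) (b j)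

lemma linftyNorm_nonneg {p : ℕ} (v : Fin p → ℝ) : 0 ≤ linftyNorm v :=
  Real.iSup_nonneg fun j => abs_nonneg (v j)

lemma abs_le_linftyNorm {p : ℕ} (v : Fin p → ℝ) (j : Fin p) : |v j| ≤ linftyNorm v :=
  le_ciSup (f := fun j => |v j|) (Set.finite_range _).bddAbove j

lemma dotProduct_le_linftyNorm_mul_l1norm {p : ℕ} (u v : Fin p → ℝ) :
    u ⬝ᵥ v ≤ linftyNorm u * l1norm v := by
  calc u ⬝ᵥ v ≤ ∑ j, |u j| * |v j| :=
        Finset.sum_le_sum fun j _ => (le_abs_self _).trans (abs_mul _ _).le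
    _ ≤ ∑ j, linftyNorm u * |v j| :=
        Finset.sum_le_sum fun j _ =>
          mul_le_mul_of_nonneg_right (abs_le_linftyNorm u j) (abs_nonneg _)
    _ = linftyNorm u * l1norm v := by rw [l1norm, Finset.mul_sum]

lemma l2normSq_eq_dotProduct {n : ℕ} (v : Fin n → ℝ) : l2normSq v = v ⬝ᵥ v := by
  simp only [l2normSq, dotProduct, sq]

lemma l2normSq_sub {n : ℕ} (a b : Fin n → ℝ) :
    l2normSq (a - b) = l2normSq a - 2 * (a ⬝ᵥ b) + l2normSq b := by
  simp only [l2normSq_eq_dotProduct, sub_dotProduct, dotProduct_sub, dotProduct_comm b a]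
  ring

lemma lasso_basic_inequality {n p : ℕ} (X : Matrix (Fin n) (Fin p) ℝ) (y : Fin n → ℝ)
    (β βt : Fin p → ℝ) (lam : ℝ)
    (hmin : 1 / (2 * (n : ℝ)) * l2normSq (y - X *ᵥ βt) + lam * l1norm βt
      ≤ 1 / (2 * (n : ℝ)) * l2normSq (y - X *ᵥ β) + lam * l1norm β) :
    1 / (2 * (n : ℝ)) * l2normSq (X *ᵥ βt - X *ᵥ β) + lam * l1norm βt
      ≤ 1 / (n : ℝ) * ((Xᵀ *ᵥ (y - X *ᵥ β)) ⬝ᵥ (βt - β)) + lam * l1norm β := by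
  have hresidual : y - X *ᵥ βt = (y - X *ᵥ β) - (X *ᵥ βt - X *ᵥ β) := by abel
  have hcross : (y - X *ᵥ β) ⬝ᵥ (X *ᵥ βt - X *ᵥ β) = (Xᵀ *ᵥ (y - X *ᵥ β)) ⬝ᵥ (βt - β) := by
    rw [← mulVec_sub, dotProduct_mulVec, ← mulVec_transpose]
  have htwo : 1 / (2 * (n : ℝ)) * 2 = 1 / (n : ℝ) := by ring
  rw [hresidual, l2normSq_sub, hcross] at hmin
  rw [← htwo]
  linarith

theorem lasso_prediction_bound_general {n p : ℕ}
    (X : Matrix (Fin n) (Fin p) ℝ) (y : Fin n → ℝ) (β : Fin p → ℝ)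
    (e : Fin n → ℝ) (he : e = y - X.mulVec β)
    (lam lam0 : ℝ) (hlam : lam0 ≤ lam)
    (hnoise : linftyNorm ((1 / (n : ℝ)) • Xᵀ.mulVec e) ≤ lam0)
    (βt : Fin p → ℝ)
    (hmin : ∀ b : Fin p → ℝ,
      1 / (2 * (n : ℝ)) * l2normSq (y - X.mulVec βt) + lam * l1norm βt
        ≤ 1 / (2 * (n : ℝ)) * l2normSq (y - X.mulVec b) + lam * l1norm b) :
    1 / (n : ℝ) * l2normSq (X.mulVec βt - X.mulVec β) ≤ 4 * lam * l1norm β := by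
  have hlam_nonneg : 0 ≤ lam := (linftyNorm_nonneg _).trans (hnoise.trans hlam)
  have hbasic := lasso_basic_inequality X y β βt lam (hmin β)
  rw [← he] at hbasic
  have hnoise_term : 1 / (n : ℝ) * ((Xᵀ *ᵥ e) ⬝ᵥ (βt - β)) ≤ lam * (l1norm βt + l1norm β) :=
    calc 1 / (n : ℝ) * ((Xᵀ *ᵥ e) ⬝ᵥ (βt - β))
        = ((1 / (n : ℝ)) • Xᵀ *ᵥ e) ⬝ᵥ (βt - β) := by rw [smul_dotProduct, smul_eq_mul]
      _ ≤ lam0 * l1norm (βt - β) :=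
        (dotProduct_le_linftyNorm_mul_l1norm _ _).trans
          (mul_le_mul_of_nonneg_right hnoise (l1norm_nonneg _))
      _ ≤ lam * (l1norm βt + l1norm β) :=
        mul_le_mul hlam (l1norm_sub_le βt β) (l1norm_nonneg _) hlam_nonneg
  have htwo : 1 / (n : ℝ) = 2 * (1 / (2 * (n : ℝ))) := by ring
  rw [htwo]
  linarith

/-- Deterministic Lasso prediction bound (equation (9)): if `‖(1/n)X'e‖∞ ≤ λ₀` and
`λ ≥ λ₀`, then any Lasso minimizer `β̃` satisfies
`(1/n)‖X·β̃ − X·β‖₂² ≤ 4λ‖β‖₁`. -/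
theorem lasso_prediction_bound {n p : ℕ} (hn : 0 < n) (hp : 0 < p)
    (X : Matrix (Fin n) (Fin p) ℝ) (y : Fin n → ℝ) (β : Fin p → ℝ)
    (e : Fin n → ℝ) (he : e = y - X.mulVec β)
    (lam lam0 : ℝ) (hlam0 : 0 ≤ lam0) (hlam : lam0 ≤ lam)
    (hnoise : linftyNorm ((1 / (n : ℝ)) • Xᵀ.mulVec e) ≤ lam0)
    (βt : Fin p → ℝ)
    (hmin : ∀ b : Fin p → ℝ,
      1 / (2 * (n : ℝ)) * l2normSq (y - X.mulVec βt) + lam * l1norm βt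
        ≤ 1 / (2 * (n : ℝ)) * l2normSq (y - X.mulVec b) + lam * l1norm b) :
    1 / (n : ℝ) * l2normSq (X.mulVec βt - X.mulVec β) ≤ 4 * lam * l1norm β :=
  lasso_prediction_bound_general X y β e he lam lam0 hlam hnoise βt hmin
end
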